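/- arXiv:1505.03643 — 5 statements merged into one kernel-verified Lean document; each statement's English description precedes it below -/
import Mathlib

section
/- Let m ≥ 1. For all v, w, u : Fin m → ℍ, the iterated bracket of the associated matrices satisfies ⁅⁅M(v), M(w)⁆, M(u)⁆ = M(α), where α : Fin m → ℍ is given componentwise by α_ℓ = v_ℓ · h₀(w,u) − w_ℓ · h₀(v,u) − u_ℓ · ( h₀(v,w) − h₀(w,v) ). -/
open Quaternion Matrix

/-- For `v : Fin m → ℍ`, the `(m+1)×(m+1)` quaternion matrix with `v_ℓ` in the
`(ℓ, m+1)` entry, `conj(v_ℓ)` in the `(m+1, ℓ)` entry, and zeros elsewhere. -/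
noncomputable def Mmat (m : ℕ) (v : Fin m → ℍ[ℝ]) :
    Matrix (Fin (m + 1)) (Fin (m + 1)) ℍ[ℝ] :=
  Matrix.of fun i j =>
    if hi : (i : ℕ) < m then
      if (j : ℕ) = m then v ⟨i, hi⟩ else 0
    else
      if hj : (j : ℕ) < m then star (v ⟨j, hj⟩) else 0

/-- `h₀(v,w) = Σ_ℓ conj(v_ℓ)·w_ℓ`. -/
noncomputable def h₀ (m : ℕ) (v w : Fin m → ℍ[ℝ]) : ℍ[ℝ] :=
  ∑ ℓ, star (v ℓ) * w ℓ

/-- The product `M(v) * M(w)`: block diagonal, with `v_i conj(w_j)` in the upper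
left block and `h₀(v,w)` in the bottom-right corner. -/
noncomputable def Cmat (m : ℕ) (v w : Fin m → ℍ[ℝ]) :
    Matrix (Fin (m + 1)) (Fin (m + 1)) ℍ[ℝ] :=
  Matrix.of fun i j =>
    if hi : (i : ℕ) < m then
      if hj : (j : ℕ) < m then v ⟨i, hi⟩ * star (w ⟨j, hj⟩) else 0
    else
      if (j : ℕ) < m then 0 else h₀ m v w

lemma star_h₀ (m : ℕ) (v w : Fin m → ℍ[ℝ]) : star (h₀ m v w) = h₀ m w v := by
  simp [h₀, mul_comm]

lemma mul_Mmat (m : ℕ) (v w : Fin m → ℍ[ℝ]) :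
    Mmat m v * Mmat m w = Cmat m v w := by
  refine Matrix.ext fun i j => ?_
  have hi' := i.is_lt
  have hj' := j.is_lt
  simp only [Matrix.mul_apply, Mmat, Cmat, Matrix.of_apply]
  rw [Fin.sum_univ_castSucc]
  by_cases hi : (i : ℕ) < m <;> by_cases hj : (j : ℕ) < m
  all_goals try have hi2 : (i : ℕ) = m := by omega
  all_goals try have hj2 : (j : ℕ) = m := by omega
  all_goals
    simp_all [h₀, Nat.ne_of_lt, fun k : Fin m => (k.is_lt).ne, Fin.val_last]

lemma Cmat_mul_Mmat (m : ℕ) (v w u : Fin m → ℍ[ℝ]) :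
    Cmat m v w * Mmat m u = Matrix.of (fun i j : Fin (m + 1) =>
      if hi : (i : ℕ) < m then
        if (j : ℕ) < m then 0 else v ⟨i, hi⟩ * h₀ m w u
      else
        if hj : (j : ℕ) < m then h₀ m v w * star (u ⟨j, hj⟩) else 0) := by
  refine Matrix.ext fun i j => ?_
  have hi' := i.is_lt
  have hj' := j.is_lt
  simp only [Matrix.mul_apply, Mmat, Cmat, Matrix.of_apply]
  rw [Fin.sum_univ_castSucc]
  by_cases hi : (i : ℕ) < m <;> by_cases hj : (j : ℕ) < m
  all_goals try have hi2 : (i : ℕ) = m := by omega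
  all_goals try have hj2 : (j : ℕ) = m := by omega
  all_goals
    simp_all [h₀, Nat.ne_of_lt, fun k : Fin m => (k.is_lt).ne, Fin.val_last,
      Finset.mul_sum, mul_assoc]

lemma Mmat_mul_Cmat (m : ℕ) (u v w : Fin m → ℍ[ℝ]) :
    Mmat m u * Cmat m v w = Matrix.of (fun i j : Fin (m + 1) =>
      if hi : (i : ℕ) < m then
        if (j : ℕ) < m then 0 else u ⟨i, hi⟩ * h₀ m v w
      else
        if hj : (j : ℕ) < m then h₀ m u v * star (w ⟨j, hj⟩) else 0) := by
  refine Matrix.ext fun i j => ?_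
  have hi' := i.is_lt
  have hj' := j.is_lt
  simp only [Matrix.mul_apply, Mmat, Cmat, Matrix.of_apply]
  rw [Fin.sum_univ_castSucc]
  by_cases hi : (i : ℕ) < m <;> by_cases hj : (j : ℕ) < m
  all_goals try have hi2 : (i : ℕ) = m := by omega
  all_goals try have hj2 : (j : ℕ) = m := by omega
  all_goals
    simp_all [h₀, Nat.ne_of_lt, fun k : Fin m => (k.is_lt).ne, Fin.val_last,
      Finset.sum_mul, mul_assoc]

/-- The iterated commutator `[[M(v), M(w)], M(u)]` equals `M(α)` with
`α_ℓ = v_ℓ h₀(w,u) − w_ℓ h₀(v,u) − u_ℓ (h₀(v,w) − h₀(w,v))`. -/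
theorem stmt2 (m : ℕ) (hm : 1 ≤ m) (v w u : Fin m → ℍ[ℝ]) :
    ⁅⁅Mmat m v, Mmat m w⁆, Mmat m u⁆ =
      Mmat m (fun ℓ =>
        v ℓ * h₀ m w u - w ℓ * h₀ m v u - u ℓ * (h₀ m v w - h₀ m w v)) := by
  rw [Ring.lie_def, Ring.lie_def, mul_Mmat, mul_Mmat, sub_mul, mul_sub,
    Cmat_mul_Mmat, Cmat_mul_Mmat, Mmat_mul_Cmat, Mmat_mul_Cmat]
  refine Matrix.ext fun i j => ?_
  have hi' := i.is_lt
  have hj' := j.is_lt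
  simp only [Matrix.sub_apply, Matrix.of_apply, Mmat]
  by_cases hi : (i : ℕ) < m <;> by_cases hj : (j : ℕ) < m
  all_goals try have hi2 : (i : ℕ) = m := by omega
  all_goals try have hj2 : (j : ℕ) = m := by omega
  all_goals simp_all [Nat.ne_of_lt]
  · rw [mul_sub]
  · rw [star_h₀, star_h₀, star_h₀, star_h₀]
    noncomm_ring
end

section
/- Let m ≥ 1 and let W₀ be an ℝ-submodule of Fin m → ℍ (the quaternionic m-space viewed as a real vector space) which is totally real, i.e. for all v, w ∈ W₀ there exists r : ℝ with h₀(v,w) = r (the real quaternion r). Then for all v, w, u ∈ W₀ there exists α ∈ W₀ such that ⁅⁅M(v), M(w)⁆, M(u)⁆ = M(α); in other words, the image of W₀ under M is a Lie triple system. -/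
open Quaternion Matrix

lemma Mmat_cc (m : ℕ) (v : Fin m → ℍ[ℝ]) (i j : Fin m) :
    Mmat m v i.castSucc j.castSucc = 0 := by
  simp [Mmat, i.isLt, j.isLt.ne]

lemma Mmat_cl (m : ℕ) (v : Fin m → ℍ[ℝ]) (i : Fin m) :
    Mmat m v i.castSucc (Fin.last m) = v i := by
  simp [Mmat, i.isLt]

lemma Mmat_lc (m : ℕ) (v : Fin m → ℍ[ℝ]) (j : Fin m) :
    Mmat m v (Fin.last m) j.castSucc = star (v j) := by
  simp [Mmat, j.isLt]

lemma Mmat_ll (m : ℕ) (v : Fin m → ℍ[ℝ]) :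
    Mmat m v (Fin.last m) (Fin.last m) = 0 := by
  simp [Mmat]

lemma bracket_cc (m : ℕ) (v w : Fin m → ℍ[ℝ]) (i j : Fin m) :
    ⁅Mmat m v, Mmat m w⁆ i.castSucc j.castSucc
      = v i * star (w j) - w i * star (v j) := by
  simp [Ring.lie_def, Matrix.sub_apply, Matrix.mul_apply, Fin.sum_univ_castSucc,
    Mmat_cc, Mmat_cl, Mmat_lc, Mmat_ll]

lemma bracket_cl (m : ℕ) (v w : Fin m → ℍ[ℝ]) (i : Fin m) :
    ⁅Mmat m v, Mmat m w⁆ i.castSucc (Fin.last m) = 0 := by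
  simp [Ring.lie_def, Matrix.sub_apply, Matrix.mul_apply, Fin.sum_univ_castSucc,
    Mmat_cc, Mmat_cl, Mmat_lc, Mmat_ll]

lemma bracket_lc (m : ℕ) (v w : Fin m → ℍ[ℝ]) (j : Fin m) :
    ⁅Mmat m v, Mmat m w⁆ (Fin.last m) j.castSucc = 0 := by
  simp [Ring.lie_def, Matrix.sub_apply, Matrix.mul_apply, Fin.sum_univ_castSucc,
    Mmat_cc, Mmat_cl, Mmat_lc, Mmat_ll]

lemma bracket_ll (m : ℕ) (v w : Fin m → ℍ[ℝ]) :
    ⁅Mmat m v, Mmat m w⁆ (Fin.last m) (Fin.last m) = h₀ m v w - h₀ m w v := by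
  simp [Ring.lie_def, Matrix.sub_apply, Matrix.mul_apply, Fin.sum_univ_castSucc,
    Mmat_cc, Mmat_cl, Mmat_lc, Mmat_ll, h₀]

/-- A totally real real subspace `W₀ ⊆ ℍ^m` (i.e. `h₀(W₀,W₀) ⊆ ℝ`) gives a
Lie triple system: `[[M(v),M(w)],M(u)] = M(α)` for some `α ∈ W₀`. -/
theorem stmt3 (m : ℕ) (hm : 1 ≤ m) (W₀ : Submodule ℝ (Fin m → ℍ[ℝ]))
    (htr : ∀ v ∈ W₀, ∀ w ∈ W₀, ∃ r : ℝ, h₀ m v w = algebraMap ℝ ℍ[ℝ] r) :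
    ∀ v ∈ W₀, ∀ w ∈ W₀, ∀ u ∈ W₀, ∃ α ∈ W₀,
      ⁅⁅Mmat m v, Mmat m w⁆, Mmat m u⁆ = Mmat m α := by
  intro v hv w hw u hu
  obtain ⟨r, hr⟩ := htr w hw u hu
  obtain ⟨s, hs⟩ := htr v hv u hu
  obtain ⟨t, ht⟩ := htr v hv w hw
  have hwv : h₀ m w v = algebraMap ℝ ℍ[ℝ] t := by
    rw [← star_h₀, ht]; simp
  have huw : h₀ m u w = algebraMap ℝ ℍ[ℝ] r := by
    rw [← star_h₀, hr]; simp
  have huv : h₀ m u v = algebraMap ℝ ℍ[ℝ] s := by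
    rw [← star_h₀, hs]; simp
  refine ⟨r • v - s • w, sub_mem (W₀.smul_mem r hv) (W₀.smul_mem s hw), ?_⟩
  have hAB : h₀ m v w - h₀ m w v = 0 := by rw [ht, hwv, sub_self]
  set A := ⁅Mmat m v, Mmat m w⁆ with hA
  have hcc : ∀ i j : Fin m, A i.castSucc j.castSucc
      = v i * star (w j) - w i * star (v j) := fun i j => bracket_cc m v w i j
  have hcl : ∀ i : Fin m, A i.castSucc (Fin.last m) = 0 := fun i => bracket_cl m v w i
  have hlc : ∀ j : Fin m, A (Fin.last m) j.castSucc = 0 := fun j => bracket_lc m v w j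
  have hll : A (Fin.last m) (Fin.last m) = 0 := by
    rw [hA, bracket_ll, hAB]
  refine Matrix.ext fun i j => ?_
  induction i using Fin.lastCases with
  | last =>
    induction j using Fin.lastCases with
    | last =>
      simp [Ring.lie_def, Matrix.sub_apply, Matrix.mul_apply, Fin.sum_univ_castSucc,
        hcc, hcl, hlc, hll, Mmat_cc, Mmat_cl, Mmat_lc, Mmat_ll]
    | cast j =>
      simp only [Ring.lie_def, Matrix.sub_apply, Matrix.mul_apply, Fin.sum_univ_castSucc,
        hcc, hcl, hlc, hll, Mmat_cc, Mmat_cl, Mmat_lc, Mmat_ll,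
        mul_zero, zero_mul, Finset.sum_const_zero, add_zero, zero_add, sub_zero, zero_sub]
      simp only [mul_sub, Finset.sum_sub_distrib, neg_sub, ← mul_assoc]
      rw [← Finset.sum_mul, ← Finset.sum_mul]
      rw [show (∑ k, star (u k) * w k) = h₀ m u w from rfl,
          show (∑ k, star (u k) * v k) = h₀ m u v from rfl, huw, huv]
      simp [Mmat_lc, Pi.sub_apply, Pi.smul_apply, star_sub, Quaternion.star_smul, Algebra.smul_def, Quaternion.coe_commutes]
  | cast i =>
    induction j using Fin.lastCases with
    | last =>
      simp only [Ring.lie_def, Matrix.sub_apply, Matrix.mul_apply, Fin.sum_univ_castSucc,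
        hcc, hcl, hlc, hll, Mmat_cc, Mmat_cl, Mmat_lc, Mmat_ll,
        mul_zero, zero_mul, Finset.sum_const_zero, add_zero, zero_add, sub_zero, zero_sub]
      simp only [sub_mul, Finset.sum_sub_distrib, mul_assoc]
      rw [← Finset.mul_sum, ← Finset.mul_sum]
      rw [show (∑ k, star (w k) * u k) = h₀ m w u from rfl,
          show (∑ k, star (v k) * u k) = h₀ m v u from rfl, hr, hs]
      simp [Mmat_cl, Algebra.smul_def, Algebra.commutes]
    | cast j =>
      simp [Ring.lie_def, Matrix.sub_apply, Matrix.mul_apply, Fin.sum_univ_castSucc,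
        hcc, hcl, hlc, hll, Mmat_cc, Mmat_cl, Mmat_lc, Mmat_ll]
end

section
/- Let m ≥ 1, let δ ∈ ℍ be a nonzero pure quaternion (re δ = 0, δ ≠ 0), and let W₀ be an ℝ-submodule of Fin m → ℍ which is totally complex with respect to δ, i.e. (i) for every v ∈ W₀ the componentwise right multiple (fun ℓ => v_ℓ · δ) lies in W₀, and (ii) for all v, w ∈ W₀ there exist r, s : ℝ with h₀(v,w) = r + s·δ. Then for all v, w, u ∈ W₀ there exists α ∈ W₀ such that ⁅⁅M(v), M(w)⁆, M(u)⁆ = M(α); in other words, the image of W₀ under M is a Lie triple system. -/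
open Quaternion Matrix

lemma mul_entry (m : ℕ) (v w : Fin m → ℍ[ℝ]) (i j : Fin (m+1)) :
    (Mmat m v * Mmat m w) i j =
      if hi : (i:ℕ) < m then
        if hj : (j:ℕ) < m then v ⟨i,hi⟩ * star (w ⟨j,hj⟩) else 0
      else if (j:ℕ) < m then 0 else h₀ m v w := by
  rw [Matrix.mul_apply, Fin.sum_univ_castSucc]
  by_cases hi : (i:ℕ) < m <;> by_cases hj : (j:ℕ) < m
  · simp [Mmat, hi, hj, Fin.val_last, Nat.ne_of_lt hj]
  · have hjm : (j:ℕ) = m := Nat.eq_of_lt_succ_of_not_lt j.isLt hj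
    simp [Mmat, hi, hj, hjm, Fin.val_last]
    exact Finset.sum_eq_zero fun x _ => by simp [Nat.ne_of_lt x.isLt]
  · simp [Mmat, hi, hj, Fin.val_last, Nat.ne_of_lt hj]
  · have hjm : (j:ℕ) = m := Nat.eq_of_lt_succ_of_not_lt j.isLt hj
    simp [Mmat, h₀, hi, hj, hjm, Fin.val_last]

lemma triple_entry (m : ℕ) (v w u : Fin m → ℍ[ℝ]) (i j : Fin (m+1)) :
    (Mmat m v * Mmat m w * Mmat m u) i j =
      if hi : (i:ℕ) < m then
        if (j:ℕ) = m then v ⟨i,hi⟩ * h₀ m w u else 0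
      else
        if hj : (j:ℕ) < m then h₀ m v w * star (u ⟨j,hj⟩) else 0 := by
  rw [Matrix.mul_apply, Fin.sum_univ_castSucc]
  simp only [mul_entry]
  by_cases hi : (i:ℕ) < m <;> by_cases hj : (j:ℕ) < m
  · simp [Mmat, hi, hj, Fin.val_last, Nat.ne_of_lt hj]
  · have hjm : (j:ℕ) = m := Nat.eq_of_lt_succ_of_not_lt j.isLt hj
    simp [Mmat, h₀, hi, hj, hjm, Fin.val_last, Finset.mul_sum, mul_assoc]
  · simp [Mmat, hi, hj, Fin.val_last, Nat.ne_of_lt hj]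
  · have hjm : (j:ℕ) = m := Nat.eq_of_lt_succ_of_not_lt j.isLt hj
    simp [Mmat, hi, hj, hjm, Fin.val_last]

/-- A totally complex real subspace `W₀ ⊆ ℍ^m` relative to a nonzero pure quaternion `δ`
(i.e. `W₀δ = W₀` and `h₀(W₀,W₀) ⊆ ℝ(δ)`) gives a Lie triple system:
`[[M(v),M(w)],M(u)] = M(α)` for some `α ∈ W₀`. -/
theorem stmt4 (m : ℕ) (hm : 1 ≤ m) (δ : ℍ[ℝ]) (hδre : δ.re = 0) (hδ : δ ≠ 0)
    (W₀ : Submodule ℝ (Fin m → ℍ[ℝ]))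
    (hmul : ∀ v ∈ W₀, (fun ℓ => v ℓ * δ) ∈ W₀)
    (htc : ∀ v ∈ W₀, ∀ w ∈ W₀, ∃ r s : ℝ,
      h₀ m v w = algebraMap ℝ ℍ[ℝ] r + algebraMap ℝ ℍ[ℝ] s * δ) :
    ∀ v ∈ W₀, ∀ w ∈ W₀, ∀ u ∈ W₀, ∃ α ∈ W₀,
      ⁅⁅Mmat m v, Mmat m w⁆, Mmat m u⁆ = Mmat m α := by
  intro v hv w hw u hu
  have hsδ : star δ = -δ := by
    ext <;> simp [hδre]
  obtain ⟨r1, s1, h1⟩ := htc w hw u hu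
  obtain ⟨r2, s2, h2⟩ := htc v hv u hu
  obtain ⟨r3, s3, h3⟩ := htc v hv w hw
  have hcoe : ∀ r : ℝ, algebraMap ℝ ℍ[ℝ] r = (r : ℍ[ℝ]) := fun r => rfl
  simp only [hcoe] at h1 h2 h3
  have hwv : h₀ m w v = (r3 : ℍ[ℝ]) - (s3 : ℍ[ℝ]) * δ := by
    rw [← star_h₀, h3, star_add, StarMul.star_mul, hsδ, Quaternion.star_coe,
      Quaternion.star_coe, sub_eq_add_neg, neg_mul, Quaternion.coe_commutes]
  have hdiff : h₀ m v w - h₀ m w v = ((2*s3 : ℝ) : ℍ[ℝ]) * δ := by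
    rw [h3, hwv]
    have h4 : ∀ a b : ℍ[ℝ], a + b - (a - b) = b + b := fun a b => by abel
    rw [h4, Quaternion.coe_mul, mul_assoc]
    simp only [Quaternion.coe_mul_eq_smul, ← two_smul ℝ]
  have key : ∀ (x : ℍ[ℝ]) (r s : ℝ), x * ((r : ℍ[ℝ]) + (s : ℍ[ℝ]) * δ)
      = r • x + s • (x * δ) := by
    intro x r s
    rw [mul_add, Quaternion.mul_coe_eq_smul, ← mul_assoc, Quaternion.mul_coe_eq_smul,
      smul_mul_assoc]
  have key2 : ∀ (x : ℍ[ℝ]) (s : ℝ), x * ((s : ℍ[ℝ]) * δ) = s • (x * δ) := by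
    intro x s
    rw [← mul_assoc, Quaternion.mul_coe_eq_smul, smul_mul_assoc]
  set α : Fin m → ℍ[ℝ] :=
    fun i => v i * h₀ m w u - w i * h₀ m v u - u i * (h₀ m v w - h₀ m w v) with hα
  refine ⟨α, ?_, ?_⟩
  · have hrepr : α = r1 • v + s1 • (fun ℓ => v ℓ * δ) - r2 • w - s2 • (fun ℓ => w ℓ * δ)
        - (2*s3) • (fun ℓ => u ℓ * δ) := by
      funext i
      simp only [hα, Pi.sub_apply, Pi.add_apply, Pi.smul_apply]
      rw [h1, h2, hdiff, key, key, key2]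
      abel
    rw [hrepr]
    exact sub_mem (sub_mem (sub_mem (add_mem (W₀.smul_mem _ hv)
      (W₀.smul_mem _ (hmul v hv))) (W₀.smul_mem _ hw))
      (W₀.smul_mem _ (hmul w hw))) (W₀.smul_mem _ (hmul u hu))
  · have expand : ⁅⁅Mmat m v, Mmat m w⁆, Mmat m u⁆ =
        Mmat m v * Mmat m w * Mmat m u - Mmat m w * Mmat m v * Mmat m u
        - Mmat m u * (Mmat m v * Mmat m w) + Mmat m u * (Mmat m w * Mmat m v) := by
      simp only [Ring.lie_def]
      noncomm_ring
    refine Matrix.ext fun i j => ?_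
    rw [expand]
    simp only [Matrix.sub_apply, Matrix.add_apply, ← Matrix.mul_assoc, triple_entry]
    by_cases hi : (i:ℕ) < m <;> by_cases hj : (j:ℕ) < m
    · simp only [dif_pos hi, dif_pos hj, if_neg (Nat.ne_of_lt hj), Mmat,
        Matrix.of_apply]
      abel
    · have hjm : (j:ℕ) = m := Nat.eq_of_lt_succ_of_not_lt j.isLt hj
      simp only [dif_pos hi, if_pos hjm, Mmat, Matrix.of_apply]
      rw [hα]
      noncomm_ring
    · simp only [dif_neg hi, dif_pos hj, Mmat, Matrix.of_apply]
      rw [hα]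
      simp only [star_sub, StarMul.star_mul, star_h₀, star_star]
      noncomm_ring
    · have hjm : (j:ℕ) = m := Nat.eq_of_lt_succ_of_not_lt j.isLt hj
      simp only [dif_neg hi, dif_neg (by omega : ¬ (j:ℕ) < m), Mmat, Matrix.of_apply]
      abel
end

section
/- Let m ≥ 1 and let W₀ be an ℝ-submodule of Fin m → ℍ which is totally quaternionic, i.e. for every v ∈ W₀ and every quaternion q ∈ ℍ the componentwise right multiple (fun ℓ => v_ℓ · q) lies in W₀. Then for all v, w, u ∈ W₀ there exists α ∈ W₀ such that ⁅⁅M(v), M(w)⁆, M(u)⁆ = M(α); in other words, the image of W₀ under M is a Lie triple system. -/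
/-!
Reindexing `Fin (m + 1) ≃ Fin m ⊕ Fin 1` turns `M(v)` into the Hermitian dilation
`[[0, V], [Vᴴ, 0]]` of the column `V = v`. Over any star ring a double bracket of Hermitian
dilations is again one, `[[D V, D W], D U] = D (V Wᴴ U - W Vᴴ U - U Vᴴ W + U Wᴴ V)`. For columns
the products `Wᴴ U` are `1 × 1`, i.e. quaternions `⟨w, u⟩`, so the resulting column
`v ⟨w, u⟩ - w ⟨v, u⟩ - u ⟨v, w⟩ + u ⟨w, v⟩` is a sum of right quaternion multiples of `v, w, u`.
-/

open Quaternion Matrix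

section TripleProduct

variable {n R : Type*} [Fintype n] [Ring R] [StarRing R]

def tripleProduct (v w u : n → R) : n → R :=
  fun l => v l * (star w ⬝ᵥ u) - w l * (star v ⬝ᵥ u) - u l * (star v ⬝ᵥ w) + u l * (star w ⬝ᵥ v)

theorem tripleProduct_mem (W : AddSubgroup (n → R))
    (hW : ∀ v ∈ W, ∀ q : R, (fun l => v l * q) ∈ W) {v w u : n → R}
    (hv : v ∈ W) (hw : w ∈ W) (hu : u ∈ W) : tripleProduct v w u ∈ W :=
  W.add_mem (W.sub_mem (W.sub_mem (hW v hv _) (hW w hw _)) (hW u hu _)) (hW u hu _)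

end TripleProduct

namespace Matrix

theorem reindex_lie {n o R : Type*} [Ring R] [Fintype n] [Fintype o] (e : n ≃ o)
    (A B : Matrix n n R) : reindex e e ⁅A, B⁆ = ⁅reindex e e A, reindex e e B⁆ := by
  simp only [Ring.lie_def, ← coe_reindexRingEquiv (R := R), map_sub, map_mul]

variable {n o ι R : Type*} [Ring R] [StarRing R]

def hermitianDilation (V : Matrix n o R) : Matrix (n ⊕ o) (n ⊕ o) R :=
  fromBlocks 0 V Vᴴ 0

theorem lie_lie_hermitianDilation [Fintype n] [Fintype o] (V W U : Matrix n o R) :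
    ⁅⁅hermitianDilation V, hermitianDilation W⁆, hermitianDilation U⁆ =
      hermitianDilation (V * Wᴴ * U - W * Vᴴ * U - U * Vᴴ * W + U * Wᴴ * V) := by
  simp only [hermitianDilation, Ring.lie_def, fromBlocks_multiply, sub_eq_add_neg,
    fromBlocks_neg, fromBlocks_add, conjTranspose_add, conjTranspose_neg, conjTranspose_mul,
    conjTranspose_conjTranspose, Matrix.mul_zero, Matrix.zero_mul, add_zero, zero_add, neg_zero,
    Matrix.mul_assoc, Matrix.add_mul, Matrix.mul_add, Matrix.neg_mul, Matrix.mul_neg]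
  congr 1 <;> abel

theorem replicateCol_mul_conjTranspose_mul_replicateCol [Fintype n] [Unique ι]
    (v w u : n → R) :
    replicateCol ι v * (replicateCol ι w)ᴴ * replicateCol ι u =
      replicateCol ι fun l => v l * (star w ⬝ᵥ u) := by
  ext i j : 1
  simp [Matrix.mul_apply, dotProduct, Finset.mul_sum, mul_assoc]

theorem lie_lie_hermitianDilation_replicateCol [Fintype n] [Unique ι] (v w u : n → R) :
    ⁅⁅hermitianDilation (replicateCol ι v), hermitianDilation (replicateCol ι w)⁆,
        hermitianDilation (replicateCol ι u)⁆ =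
      hermitianDilation (replicateCol ι (tripleProduct v w u)) := by
  rw [lie_lie_hermitianDilation]
  congr 1
  simp only [replicateCol_mul_conjTranspose_mul_replicateCol]
  ext i j : 1
  simp [tripleProduct]

end Matrix

theorem Mmat_eq_reindex_hermitianDilation (m : ℕ) (v : Fin m → ℍ[ℝ]) :
    Mmat m v = reindex finSumFinEquiv finSumFinEquiv
      (hermitianDilation (replicateCol (Fin 1) v)) := by
  ext i j : 1
  obtain ⟨i | i, rfl⟩ := finSumFinEquiv.surjective i <;>
  obtain ⟨j | j, rfl⟩ := finSumFinEquiv.surjective j <;>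
  simp [Mmat, hermitianDilation, j.isLt.ne]

theorem stmt5_general (m : ℕ) (W₀ : Submodule ℝ (Fin m → ℍ[ℝ]))
    (hq : ∀ v ∈ W₀, ∀ q : ℍ[ℝ], (fun ℓ => v ℓ * q) ∈ W₀) :
    ∀ v ∈ W₀, ∀ w ∈ W₀, ∀ u ∈ W₀, ∃ α ∈ W₀,
      ⁅⁅Mmat m v, Mmat m w⁆, Mmat m u⁆ = Mmat m α := by
  intro v hv w hw u hu
  refine ⟨tripleProduct v w u, tripleProduct_mem W₀.toAddSubgroup hq hv hw hu, ?_⟩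
  simp only [Mmat_eq_reindex_hermitianDilation, ← reindex_lie]
  exact congrArg _ (lie_lie_hermitianDilation_replicateCol v w u)

/-- A totally quaternionic real subspace `W₀ ⊆ ℍ^m` (i.e. `W₀q ⊆ W₀` for all `q ∈ ℍ`)
gives a Lie triple system: `[[M(v),M(w)],M(u)] = M(α)` for some `α ∈ W₀`. -/
theorem stmt5 (m : ℕ) (hm : 1 ≤ m) (W₀ : Submodule ℝ (Fin m → ℍ[ℝ]))
    (hq : ∀ v ∈ W₀, ∀ q : ℍ[ℝ], (fun ℓ => v ℓ * q) ∈ W₀) :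
    ∀ v ∈ W₀, ∀ w ∈ W₀, ∀ u ∈ W₀, ∃ α ∈ W₀,
      ⁅⁅Mmat m v, Mmat m w⁆, Mmat m u⁆ = Mmat m α :=
  stmt5_general m W₀ hq
end

section
/- Let k be a field, a, b ∈ k, D = ℍ[k,a,b], n ≥ 1, and c : Fin n → k. Define Q : (Fin n → D) → k by Q(x) = Σ_i c_i·( (x_i).re² − a·(x_i).imI² − b·(x_i).imJ² + a·b·(x_i).imK² ). Then: (i) for every x : Fin n → D, Σ_i star(x_i) · (c_i • x_i) = algebraMap k D (Q x), so Q is the trace form of the diagonal Hermitian form ⟨c₁,…,c_n⟩ over D; and (ii) Q is a quadratic form on the 4n-dimensional k-vector space Fin n → D, and it is equivalent (isometric over k) to the diagonal quadratic form on (Fin n × Fin 4) → k given by the weighted sum of squares with weights w(i,0) = c_i, w(i,1) = −a·c_i, w(i,2) = −b·c_i, w(i,3) = a·b·c_i. (That is, q_h ≅ φ_D ⊗ q, where φ_D = ⟨1,−a,−b,ab⟩ is the norm form of D and q = ⟨c₁,…,c_n⟩.) -/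
/-!
Since `star x * x` is the scalar `N x`, with `N = ⟨1, -a, -b, ab⟩` the norm form of `ℍ[k,a,b]`,
the Hermitian form gives `h(x, x) = Σ c_i N(x_i)`. In the coordinates of each `x_i` with respect
to the basis `1, i, j, k` this is the diagonal form with weights `c_i • ⟨1, -a, -b, ab⟩`.
-/

open Quaternion Matrix

namespace QuaternionAlgebra

variable {R : Type*} [CommRing R] (a b : R)

def normForm (x : ℍ[R,a,b]) : R :=
  x.re ^ 2 - a * x.imI ^ 2 - b * x.imJ ^ 2 + a * b * x.imK ^ 2

theorem star_mul_self_eq_normForm (x : ℍ[R,a,b]) :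
    star x * x = algebraMap R ℍ[R,a,b] (normForm a b x) := by
  rw [star_mul_eq_coe, algebraMap_eq]
  congr 1
  simp only [re_mul, re_star, imI_star, imJ_star, imK_star, normForm]
  ring

theorem sum_star_mul_smul_self {ι : Type*} [Fintype ι] (c : ι → R) (x : ι → ℍ[R,a,b]) :
    ∑ i, star (x i) * (c i • x i) = algebraMap R ℍ[R,a,b] (∑ i, c i * normForm a b (x i)) := by
  rw [map_sum]
  refine Finset.sum_congr rfl fun i _ => ?_
  rw [mul_smul_comm, star_mul_self_eq_normForm, Algebra.smul_def, map_mul]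

def coordEquiv (ι : Type*) : (ι → ℍ[R,a,b]) ≃ₗ[R] (ι × Fin 4 → R) :=
  (LinearEquiv.piCongrRight fun _ => linearEquivTuple a 0 b).trans
    (LinearEquiv.curry R R ι (Fin 4)).symm

theorem coordEquiv_apply {ι : Type*} (x : ι → ℍ[R,a,b]) (i : ι) (j : Fin 4) :
    coordEquiv a b ι x (i, j) = ![(x i).re, (x i).imI, (x i).imJ, (x i).imK] j :=
  rfl

theorem weightedSumSquares_coordEquiv {ι : Type*} [Fintype ι] (c : ι → R) (x : ι → ℍ[R,a,b]) :
    QuadraticMap.weightedSumSquares R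
        (fun p : ι × Fin 4 => ![c p.1, -a * c p.1, -b * c p.1, a * b * c p.1] p.2)
        (coordEquiv a b ι x) = ∑ i, c i * normForm a b (x i) := by
  rw [QuadraticMap.weightedSumSquares_apply, Fintype.sum_prod_type]
  refine Finset.sum_congr rfl fun i _ => ?_
  simp only [coordEquiv_apply, smul_eq_mul, Fin.sum_univ_four, cons_val_zero, cons_val_one,
    cons_val, normForm]
  ring

end QuaternionAlgebra

theorem stmt9_general (k : Type*) [Field k] (a b : k) (n : ℕ) (c : Fin n → k)
    (Q : (Fin n → ℍ[k,a,b]) → k)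
    (hQ : ∀ x, Q x = ∑ i, c i *
      ((x i).re ^ 2 - a * (x i).imI ^ 2 - b * (x i).imJ ^ 2 + a * b * (x i).imK ^ 2)) :
    (∀ x : Fin n → ℍ[k,a,b],
        ∑ i, star (x i) * (c i • x i) = algebraMap k ℍ[k,a,b] (Q x)) ∧
    (∃ Qf : QuadraticForm k (Fin n → ℍ[k,a,b]),
        (∀ x, Qf x = Q x) ∧
        Module.finrank k (Fin n → ℍ[k,a,b]) = 4 * n ∧
        QuadraticMap.Equivalent Qf
          (QuadraticMap.weightedSumSquares k
            (fun p : Fin n × Fin 4 =>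
              ![c p.1, -a * c p.1, -b * c p.1, a * b * c p.1] p.2))) := by
  have hQ' : ∀ x, Q x = ∑ i, c i * QuaternionAlgebra.normForm a b (x i) := hQ
  set e := QuaternionAlgebra.coordEquiv a b (Fin n)
  refine ⟨fun x => ?_, (QuadraticMap.weightedSumSquares k _).comp e.toLinearMap, fun x => ?_, ?_,
    ⟨(QuadraticMap.isometryEquivOfCompLinearEquiv _ e).symm⟩⟩
  · rw [hQ', QuaternionAlgebra.sum_star_mul_smul_self]
  · rw [hQ', QuadraticMap.comp_apply, LinearEquiv.coe_coe,
      QuaternionAlgebra.weightedSumSquares_coordEquiv]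
  · rw [Module.finrank_pi_fintype, Finset.sum_const, QuaternionAlgebra.finrank_eq_four,
      Finset.card_univ, Fintype.card_fin, smul_eq_mul, mul_comm]

/-- The trace form of the diagonal Hermitian form `⟨c₁,…,c_n⟩` over `D = ℍ[k,a,b]`:
`Q(x) = Σ_i c_i (x_i.re² − a x_i.imI² − b x_i.imJ² + a b x_i.imK²)`. It is the
tensor product `φ_D ⊗ q` of the norm form `φ_D = ⟨1,−a,−b,ab⟩` with `q = ⟨c₁,…,c_n⟩`. -/
theorem stmt9 (k : Type*) [Field k] (a b : k) (n : ℕ) (hn : 1 ≤ n) (c : Fin n → k)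
    (Q : (Fin n → ℍ[k,a,b]) → k)
    (hQ : ∀ x, Q x = ∑ i, c i *
      ((x i).re ^ 2 - a * (x i).imI ^ 2 - b * (x i).imJ ^ 2 + a * b * (x i).imK ^ 2)) :
    (∀ x : Fin n → ℍ[k,a,b],
        ∑ i, star (x i) * (c i • x i) = algebraMap k ℍ[k,a,b] (Q x)) ∧
    (∃ Qf : QuadraticForm k (Fin n → ℍ[k,a,b]),
        (∀ x, Qf x = Q x) ∧
        Module.finrank k (Fin n → ℍ[k,a,b]) = 4 * n ∧
        QuadraticMap.Equivalent Qf
          (QuadraticMap.weightedSumSquares k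
            (fun p : Fin n × Fin 4 =>
              ![c p.1, -a * c p.1, -b * c p.1, a * b * c p.1] p.2))) :=
  stmt9_general k a b n c Q hQ
end
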